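/- If the Dirichlet series Σ_{n≥1} a_n/n^z converges at some complex z₀ with Re(z₀) > 0, then the factorial series Σ_{n≥0} a_n n!/((z)_{n+1}) converges for all z with Re(z) > Re(z₀) that are not nonpositive integers. -/

import Mathlib

/-!
Write the factorial series as `∑ (a n / n ^ z₀) * w n` with `w n = n ^ z₀ * n! / (z)_{n+1}`.
Since `n ^ z * n! / (z)_{n+1}` is Gauss's sequence converging to `Γ(z)`, we get
`w n = O(n ^ (Re z₀ - Re z))`. The ratio `w (n + 1) / w n` is a function of `1 / n`,
holomorphic at `0` with value `1` there, so `w (n + 1) - w n = O(n ^ (Re z₀ - Re z - 1))` is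
absolutely summable. Abel summation against the bounded partial sums of the Dirichlet series
then gives convergence.
-/

open Nat Filter

noncomputable def poch (z : ℂ) (m : ℕ) : ℂ := ∏ i ∈ Finset.range m, (z + i)

open Finset Topology Asymptotics

theorem exists_tendsto_sum_range_smul_of_summable_norm_sub {𝕜 E : Type*} [NormedField 𝕜]
    [NormedAddCommGroup E] [NormedSpace 𝕜 E] [CompleteSpace E] {b : ℕ → 𝕜} {u : ℕ → E}
    (hu : IsBoundedUnder (· ≤ ·) atTop fun N => ‖∑ i ∈ range N, u i‖)
    (hb : Tendsto b atTop (𝓝 0)) (hvar : Summable fun n => ‖b (n + 1) - b n‖) :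
    ∃ S, Tendsto (fun N => ∑ i ∈ range N, b i • u i) atTop (𝓝 S) := by
  set U : ℕ → E := fun N => ∑ i ∈ range N, u i
  obtain ⟨M, hM⟩ := hu.eventually_le
  replace hM : ∀ᶠ N in atTop, ‖U (N + 1)‖ ≤ M := (tendsto_add_atTop_nat 1).eventually hM
  have hsum : Summable fun i => (b (i + 1) - b i) • U (i + 1) := by
    refine .of_norm_bounded_eventually (hvar.mul_right M) ?_
    rw [Nat.cofinite_eq_atTop]
    filter_upwards [hM] with i hi
    exact (norm_smul_le _ _).trans (mul_le_mul_of_nonneg_left hi (norm_nonneg _))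
  have hlim := (hb.zero_smul_isBoundedUnder_le (isBoundedUnder_of_eventually_le hM)).sub
    hsum.hasSum.tendsto_sum_nat
  refine ⟨_, (tendsto_add_atTop_iff_nat 1).mp (hlim.congr fun N => ?_)⟩
  rw [sum_range_by_parts b u, Nat.add_sub_cancel]

lemma poch_succ (z : ℂ) (m : ℕ) : poch z (m + 1) = poch z m * (z + m) :=
  prod_range_succ _ m

noncomputable def powFactorialDivPoch (s z : ℂ) (n : ℕ) : ℂ := (n : ℂ) ^ s * (n ! / poch z (n + 1))

lemma powFactorialDivPoch_eq_cpow_mul_GammaSeq (s z : ℂ) {n : ℕ} (hn : n ≠ 0) :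
    powFactorialDivPoch s z n = (n : ℂ) ^ (s - z) * Complex.GammaSeq z n := by
  have hn' : (n : ℂ) ≠ 0 := Nat.cast_ne_zero.mpr hn
  have hnz : (n : ℂ) ^ z ≠ 0 := Complex.cpow_ne_zero_iff.mpr (Or.inl hn')
  rw [powFactorialDivPoch, Complex.GammaSeq, Complex.cpow_sub _ _ hn', poch]
  field_simp

lemma powFactorialDivPoch_isBigO (s z : ℂ) :
    powFactorialDivPoch s z =O[atTop] fun n => (n : ℝ) ^ (s.re - z.re) := by
  have hpow : (fun n : ℕ => (n : ℂ) ^ (s - z)) =O[atTop] fun n => (n : ℝ) ^ (s.re - z.re) := by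
    refine IsBigO.of_norm_eventuallyLE ?_
    filter_upwards [eventually_ne_atTop 0] with n hn
    rw [Complex.norm_natCast_cpow_of_pos (Nat.pos_of_ne_zero hn), Complex.sub_re]
  refine (hpow.mul ((Complex.GammaSeq_tendsto_Gamma z).isBigO_one ℝ)).congr' ?_ (by simp)
  filter_upwards [eventually_ne_atTop 0] with n hn
  exact (powFactorialDivPoch_eq_cpow_mul_GammaSeq s z hn).symm

lemma tendsto_powFactorialDivPoch_zero {s z : ℂ} (hsz : s.re < z.re) :
    Tendsto (powFactorialDivPoch s z) atTop (𝓝 0) :=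
  (powFactorialDivPoch_isBigO s z).trans_tendsto <|
    (tendsto_rpow_neg_atTop (by linarith : 0 < z.re - s.re)).comp tendsto_natCast_atTop_atTop
      |>.congr fun n => by simp

lemma powFactorialDivPoch_succ (s z : ℂ) {n : ℕ} (hn : n ≠ 0) :
    powFactorialDivPoch s z (n + 1) =
      powFactorialDivPoch s z n *
        ((1 + (n : ℂ)⁻¹) ^ s * ((1 + (n : ℂ)⁻¹) / (1 + (1 + z) * (n : ℂ)⁻¹))) := by
  have hn' : (n : ℂ) ≠ 0 := Nat.cast_ne_zero.mpr hn
  have hpow : ((n + 1 : ℕ) : ℂ) ^ s = (n : ℂ) ^ s * (1 + (n : ℂ)⁻¹) ^ s := by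
    have h := Complex.mul_cpow_ofReal_nonneg (n.cast_nonneg : (0 : ℝ) ≤ n)
      (by positivity : (0 : ℝ) ≤ 1 + (n : ℝ)⁻¹) s
    push_cast at h ⊢
    rwa [mul_add, mul_one, mul_inv_cancel₀ hn'] at h
  have hratio : (1 + (n : ℂ)⁻¹) / (1 + (1 + z) * (n : ℂ)⁻¹) = (n + 1) / (z + (n + 1)) := by
    rw [← mul_div_mul_left _ _ hn']
    congr 1
    · field_simp
    · field_simp
      ring
  rw [hratio, powFactorialDivPoch, powFactorialDivPoch, hpow, poch_succ, Nat.factorial_succ,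
    Nat.cast_mul, mul_comm ((n + 1 : ℕ) : ℂ), mul_div_mul_comm]
  push_cast
  ring

lemma powFactorialDivPoch_succ_sub_isBigO (s z : ℂ) :
    (fun n => powFactorialDivPoch s z (n + 1) - powFactorialDivPoch s z n) =O[atTop]
      fun n => (n : ℝ) ^ (s.re - z.re - 1) := by
  set ρ : ℂ → ℂ := fun t => (1 + t) ^ s * ((1 + t) / (1 + (1 + z) * t))
  have hρ : HasDerivAt ρ (deriv ρ 0) 0 := by
    refine DifferentiableAt.hasDerivAt ?_
    fun_prop (disch := simp)
  have hρ_sub : (fun n : ℕ => ρ (n : ℂ)⁻¹ - 1) =O[atTop] fun n => (n : ℝ)⁻¹ := by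
    simpa [ρ, Function.comp_def] using
      (hρ.isBigO_sub.comp_tendsto (tendsto_inv_atTop_nhds_zero_nat (𝕜 := ℂ))).norm_right
  refine ((powFactorialDivPoch_isBigO s z).mul hρ_sub).congr' ?_ ?_
  · filter_upwards [eventually_ne_atTop 0] with n hn
    rw [powFactorialDivPoch_succ s z hn]
    ring
  · filter_upwards [eventually_ne_atTop 0] with n hn
    rw [Real.rpow_sub_one (Nat.cast_ne_zero.mpr hn), div_eq_mul_inv]

lemma summable_norm_powFactorialDivPoch_succ_sub {s z : ℂ} (hsz : s.re < z.re) :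
    Summable fun n => ‖powFactorialDivPoch s z (n + 1) - powFactorialDivPoch s z n‖ :=
  summable_of_isBigO_nat (Real.summable_nat_rpow.mpr (by linarith))
    (powFactorialDivPoch_succ_sub_isBigO s z).norm_left

lemma powFactorialDivPoch_succ_smul_div_cpow (s z x : ℂ) (n : ℕ) :
    powFactorialDivPoch s z (n + 1) • (x / ((n + 1 : ℕ) : ℂ) ^ s) =
      x * ((n + 1)! : ℂ) / poch z (n + 1 + 1) := by
  have hpow : ((n + 1 : ℕ) : ℂ) ^ s ≠ 0 :=
    Complex.cpow_ne_zero_iff.mpr (Or.inl (Nat.cast_ne_zero.mpr n.succ_ne_zero))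
  rw [powFactorialDivPoch, smul_eq_mul]
  field_simp

lemma sum_Icc_one_eq_sum_range_succ {M : Type*} [AddCommMonoid M] (f : ℕ → M) (N : ℕ) :
    ∑ n ∈ Icc 1 N, f n = ∑ n ∈ range N, f (n + 1) := by
  rw [← Finset.Ico_add_one_right_eq_Icc, Finset.sum_Ico_eq_sum_range]
  simp [add_comm]

theorem stmt4_general (a : ℕ → ℂ) (z₀ : ℂ)
    (hconv : ∃ L : ℂ, Tendsto (fun N => ∑ n ∈ Finset.Icc 1 N, a n / (n : ℂ) ^ z₀)
      atTop (nhds L)) :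
    ∀ z : ℂ, z₀.re < z.re → (∀ m : ℕ, z + m ≠ 0) →
      ∃ S : ℂ, Tendsto (fun N => ∑ n ∈ Finset.range N, a n * (n ! : ℂ) / poch z (n + 1))
        atTop (nhds S) := by
  intro z hz _
  obtain ⟨L, hL⟩ := hconv
  simp_rw [sum_Icc_one_eq_sum_range_succ] at hL
  obtain ⟨S, hS⟩ := exists_tendsto_sum_range_smul_of_summable_norm_sub hL.norm.isBoundedUnder_le
    ((tendsto_powFactorialDivPoch_zero hz).comp (tendsto_add_atTop_nat 1))
    ((summable_nat_add_iff 1).mpr (summable_norm_powFactorialDivPoch_succ_sub hz))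
  refine ⟨S + a 0 * (0 ! : ℂ) / poch z (0 + 1), (tendsto_add_atTop_iff_nat 1).mp ?_⟩
  simp_rw [sum_range_succ', ← powFactorialDivPoch_succ_smul_div_cpow z₀ z]
  exact hS.add_const _

theorem stmt4 (a : ℕ → ℂ) (z₀ : ℂ) (hz₀ : 0 < z₀.re)
    (hconv : ∃ L : ℂ, Tendsto (fun N => ∑ n ∈ Finset.Icc 1 N, a n / (n : ℂ) ^ z₀)
      atTop (nhds L)) :
    ∀ z : ℂ, z₀.re < z.re → (∀ m : ℕ, z + m ≠ 0) →
      ∃ S : ℂ, Tendsto (fun N => ∑ n ∈ Finset.range N, a n * (n ! : ℂ) / poch z (n + 1))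
        atTop (nhds S) :=
  stmt4_general a z₀ hconv
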